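/- arXiv:1208.4326 — 5 statements merged into one kernel-verified Lean document; each statement's English description precedes it below -/
import Mathlib

section
/- Let k ≥ 3 be an odd integer, λ = (k−1)/2, N a positive integer with 4 ∣ N, and χ a Dirichlet character modulo N with values in ℂ. Let a : ℕ → ℂ, let t be a squarefree positive integer, and let p be any prime (no coprimality with t or N is assumed). Then for every positive integer n, (Sh_t(U_p a))(n) = (W_p(Sh_t a))(n); that is, the Shimura-lift coefficient map intertwines the half-integral weight Hecke coefficient operator U_p with the integral weight Hecke coefficient operator W_p. -/
open Finset

/-- ψ_t(m) = χ(m)·((−1)^λ t ∣ m) (Jacobi symbol) for odd m, 0 for even m,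
    where λ = (k−1)/2. -/
noncomputable def psi (k N : ℕ) (χ : DirichletCharacter ℂ N) (t : ℕ) (m : ℕ) : ℂ :=
  if Odd m then
    χ (m : ZMod N) * ((jacobiSym ((-1) ^ ((k - 1) / 2) * (t : ℤ)) m : ℤ) : ℂ)
  else 0

/-- The Shimura-lift coefficient map:
    (Sh_t a)(n) = ∑_{d ∣ n} ψ_t(d)·d^{λ−1}·a(t·(n/d)²). -/
noncomputable def ShLift (k N : ℕ) (χ : DirichletCharacter ℂ N) (t : ℕ) (a : ℕ → ℂ)
    (n : ℕ) : ℂ :=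
  ∑ d ∈ n.divisors, psi k N χ t d * (d : ℂ) ^ ((k - 1) / 2 - 1) * a (t * (n / d) ^ 2)

/-- The half-integral weight Hecke coefficient operator U_p (Shimura's formula for T_{p²}):
    (U_p a)(n) = a(p²n) + χ(p)·((−1)^λ n ∣ p)·p^{λ−1}·a(n)
                 + χ(p)²·p^{k−2}·[a(n/p²) if p² ∣ n else 0]. -/
noncomputable def Uop (k N : ℕ) (χ : DirichletCharacter ℂ N) (p : ℕ) [Fact p.Prime]
    (a : ℕ → ℂ) (n : ℕ) : ℂ :=
  a (p ^ 2 * n)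
    + χ (p : ZMod N) * ((legendreSym p ((-1) ^ ((k - 1) / 2) * (n : ℤ)) : ℤ) : ℂ)
        * (p : ℂ) ^ ((k - 1) / 2 - 1) * a n
    + χ (p : ZMod N) ^ 2 * (p : ℂ) ^ (k - 2) * (if p ^ 2 ∣ n then a (n / p ^ 2) else 0)

/-- The integral weight Hecke coefficient operator W_p:
    (W_p A)(n) = A(pn) + χ(p)²·p^{k−2}·[A(n/p) if p ∣ n else 0]. -/
noncomputable def Wop (k N : ℕ) (χ : DirichletCharacter ℂ N) (p : ℕ) (A : ℕ → ℂ)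
    (n : ℕ) : ℂ :=
  A (p * n) + χ (p : ZMod N) ^ 2 * (p : ℂ) ^ (k - 2) * (if p ∣ n then A (n / p) else 0)

/-! For d ∣ n put n' = n / d and expand both sides as sums over divisors. The first term
a(p²·t n'²) of U_p accounts for the divisors of pn that divide n in (Sh_t a)(pn). The other
divisors of pn are p·d with d ∣ n and p ∤ n'; since ψ_t is completely multiplicative with
ψ_t(p) = χ(p)·((−1)^λ t ∣ p) (for p = 2 both sides vanish because 2 ∣ N), they give the middle
term of U_p, whose symbol ((−1)^λ t n'² ∣ p) vanishes exactly when p ∣ n'. As t is squarefree,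
p² ∣ t n'² iff p ∣ n', i.e. iff d ∣ n / p, so the last term of U_p gives that of W_p. -/

theorem Nat.Prime.sq_dvd_mul_sq_iff {p t w : ℕ} (hp : p.Prime) (ht : Squarefree t) :
    p ^ 2 ∣ t * w ^ 2 ↔ p ∣ w := by
  refine ⟨fun h => ?_, fun h => Dvd.dvd.mul_left (pow_dvd_pow_of_dvd h 2) t⟩
  by_contra hw
  have hcop : (p ^ 2).Coprime (w ^ 2) := ((hp.coprime_iff_not_dvd).mpr hw).pow 2 2
  exact hp.not_isUnit (ht p (by simpa [sq] using hcop.dvd_of_dvd_mul_right h))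

theorem legendreSym_mul_sq (p : ℕ) [Fact p.Prime] (b : ℤ) (w : ℕ) :
    legendreSym p (b * w ^ 2) = if p ∣ w then 0 else legendreSym p b := by
  have hw : ((w : ℤ) : ZMod p) = 0 ↔ p ∣ w := by
    rw [Int.cast_natCast, ZMod.natCast_eq_zero_iff]
  split_ifs with h
  · rw [legendreSym.eq_zero_iff]
    push_cast at hw ⊢
    rw [hw.mpr h]; ring
  · rw [legendreSym.mul, legendreSym.sq_one' p (mt hw.mp h), mul_one]

theorem Nat.sum_divisors_prime_mul {M : Type*} [AddCommMonoid M] {p : ℕ} (hp : p.Prime)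
    (n : ℕ) (f : ℕ → M) :
    ∑ d ∈ (p * n).divisors, f d
      = ∑ d ∈ n.divisors, f d + ∑ d ∈ n.divisors with ¬ p ∣ n / d, f (p * d) := by
  rcases eq_or_ne n 0 with rfl | hn
  · simp
  have hpn : p * n ≠ 0 := mul_ne_zero hp.ne_zero hn
  have hp_dvd {d : ℕ} (hd : d ∣ p * n) (hdn : ¬ d ∣ n) : p ∣ d := by
    by_contra hpd
    exact hdn (((hp.coprime_iff_not_dvd).mpr hpd).symm.dvd_of_dvd_mul_left hd)
  have hmul {d : ℕ} (hd : d ∣ n) : p ∣ n / d ↔ p * d ∣ n := by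
    rw [Nat.dvd_div_iff_mul_dvd hd, mul_comm]
  rw [← sum_filter_add_sum_filter_not _ (· ∣ n)]
  congr 1
  · refine sum_congr (ext fun d => ?_) fun _ _ => rfl
    simp only [mem_filter, Nat.mem_divisors]
    exact ⟨fun h => ⟨h.2, hn⟩, fun h => ⟨⟨h.1.mul_left p, hpn⟩, h.1⟩⟩
  · refine sum_nbij' (· / p) (p * ·) ?_ ?_ ?_ ?_ ?_ <;>
      simp only [mem_filter, Nat.mem_divisors, and_imp]
    · rintro d hd - hdn
      obtain ⟨d, rfl⟩ := hp_dvd hd hdn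
      rw [Nat.mul_div_cancel_left _ hp.pos]
      exact ⟨⟨(Nat.mul_dvd_mul_iff_left hp.pos).mp hd, hn⟩,
        fun h => hdn ((hmul ((Nat.mul_dvd_mul_iff_left hp.pos).mp hd)).mp h)⟩
    · intro d hd _ hpd
      exact ⟨⟨Nat.mul_dvd_mul_left p hd, hpn⟩, fun h => hpd ((hmul hd).mpr h)⟩
    · rintro d hd - hdn
      exact Nat.mul_div_cancel' (hp_dvd hd hdn)
    · intro d _ _ _
      exact Nat.mul_div_cancel_left _ hp.pos
    · rintro d hd - hdn
      rw [Nat.mul_div_cancel' (hp_dvd hd hdn)]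

section

variable (k N : ℕ) (χ : DirichletCharacter ℂ N) (t : ℕ) (a : ℕ → ℂ) (p : ℕ) [hp : Fact p.Prime]

theorem psi_mul (m m' : ℕ) : psi k N χ t (m * m') = psi k N χ t m * psi k N χ t m' := by
  rcases eq_or_ne m 0 with rfl | hm
  · simp [psi]
  rcases eq_or_ne m' 0 with rfl | hm'
  · simp [psi]
  by_cases hodd : Odd m ∧ Odd m'
  · simp only [psi, if_pos (Nat.odd_mul.mpr hodd), if_pos hodd.1, if_pos hodd.2,
      jacobiSym.mul_right' _ hm hm', Nat.cast_mul, map_mul, Int.cast_mul]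
    ring
  · rw [not_and_or] at hodd
    have hodd' : ¬ Odd (m * m') := by rw [Nat.odd_mul]; tauto
    rcases hodd with h | h <;> simp [psi, h, hodd']

theorem psi_prime (h2N : 2 ∣ N) :
    psi k N χ t p = χ p * legendreSym p ((-1) ^ ((k - 1) / 2) * t) := by
  rcases hp.out.eq_two_or_odd' with rfl | hodd
  · have hχ : χ ((2 : ℕ) : ZMod N) = 0 :=
      χ.map_nonunit ((ZMod.isUnit_prime_iff_not_dvd Nat.prime_two).not.mpr (not_not.mpr h2N))
    rw [psi, if_neg (Nat.not_odd_iff_even.mpr even_two), hχ, zero_mul]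
  · rw [psi, if_pos hodd, jacobiSym.legendreSym.to_jacobiSym]

theorem ShLift_prime_mul (h2N : 2 ∣ N) (n : ℕ) :
    ShLift k N χ t a (p * n)
      = ∑ d ∈ n.divisors, psi k N χ t d * (d : ℂ) ^ ((k - 1) / 2 - 1) * a (t * (p * (n / d)) ^ 2)
        + ∑ d ∈ n.divisors, psi k N χ t d * (d : ℂ) ^ ((k - 1) / 2 - 1)
            * (χ p * legendreSym p ((-1) ^ ((k - 1) / 2) * ((t * (n / d) ^ 2 : ℕ) : ℤ))
              * (p : ℂ) ^ ((k - 1) / 2 - 1) * a (t * (n / d) ^ 2)) := by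
  rw [ShLift, Nat.sum_divisors_prime_mul hp.out, sum_filter]
  congr 1
  · refine sum_congr rfl fun d hd => ?_
    rw [Nat.mul_div_assoc p (Nat.dvd_of_mem_divisors hd)]
  · refine sum_congr rfl fun d _ => ?_
    have hsq : ((-1) ^ ((k - 1) / 2) * ((t * (n / d) ^ 2 : ℕ) : ℤ))
        = (-1) ^ ((k - 1) / 2) * t * ((n / d : ℕ) : ℤ) ^ 2 := by push_cast; ring
    rw [hsq, legendreSym_mul_sq]
    split_ifs with hpd
    · simp
    · rw [Nat.mul_div_mul_left _ _ hp.out.pos, psi_mul, psi_prime k N χ t p h2N]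
      push_cast
      ring

theorem sum_ite_sq_dvd_eq_ShLift_div (ht : Squarefree t) (n : ℕ) :
    ∑ d ∈ n.divisors, psi k N χ t d * (d : ℂ) ^ ((k - 1) / 2 - 1)
        * (if p ^ 2 ∣ t * (n / d) ^ 2 then a (t * (n / d) ^ 2 / p ^ 2) else 0)
      = if p ∣ n then ShLift k N χ t a (n / p) else 0 := by
  rcases eq_or_ne n 0 with rfl | hn
  · simp [ShLift]
  simp only [hp.out.sq_dvd_mul_sq_iff ht, mul_ite, mul_zero]
  rw [← sum_filter]
  split_ifs with hpn
  · refine sum_congr (ext fun d => ?_) fun d hd => ?_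
    · simp only [mem_filter, Nat.mem_divisors, Nat.dvd_div_iff_mul_dvd hpn]
      constructor
      · rintro ⟨⟨hd, -⟩, hpd⟩
        exact ⟨mul_comm d p ▸ (Nat.dvd_div_iff_mul_dvd hd).mp hpd,
          (Nat.div_pos (Nat.le_of_dvd (Nat.pos_of_ne_zero hn) hpn) hp.out.pos).ne'⟩
      · rintro ⟨hpd, -⟩
        have hd : d ∣ n := (dvd_mul_left d p).trans hpd
        exact ⟨⟨hd, hn⟩, (Nat.dvd_div_iff_mul_dvd hd).mpr (mul_comm p d ▸ hpd)⟩
    · have hd0 : 0 < d := Nat.pos_of_mem_divisors hd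
      obtain ⟨q, hq⟩ : p * d ∣ n := (Nat.dvd_div_iff_mul_dvd hpn).mp (Nat.dvd_of_mem_divisors hd)
      have hnd : n / d = p * q := by
        rw [hq, mul_comm p d, mul_assoc, Nat.mul_div_cancel_left _ hd0]
      have hnpd : n / p / d = q := by
        rw [Nat.div_div_eq_div_mul, hq, Nat.mul_div_cancel_left _ (Nat.mul_pos hp.out.pos hd0)]
      rw [hnd, hnpd, show t * (p * q) ^ 2 = p ^ 2 * (t * q ^ 2) by ring,
        Nat.mul_div_cancel_left _ (pow_pos hp.out.pos 2)]
  · refine sum_eq_zero fun d hd => absurd ?_ hpn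
    simp only [mem_filter, Nat.mem_divisors] at hd
    exact hd.2.trans (Nat.div_dvd_of_dvd hd.1.1)

end

theorem shimura_lift_commutes_with_Tp2_general
    (k N : ℕ) (hN4 : 4 ∣ N)
    (χ : DirichletCharacter ℂ N) (a : ℕ → ℂ)
    (t : ℕ) (ht : Squarefree t)
    (p : ℕ) [Fact p.Prime] (n : ℕ) :
    ShLift k N χ t (Uop k N χ p a) n = Wop k N χ p (ShLift k N χ t a) n := by
  have h2N : 2 ∣ N := (dvd_mul_left 2 2).trans hN4
  rw [Wop, ShLift_prime_mul k N χ t a p h2N, ← sum_ite_sq_dvd_eq_ShLift_div k N χ t a p ht,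
    mul_sum, ← sum_add_distrib, ← sum_add_distrib, ShLift]
  refine sum_congr rfl fun d _ => ?_
  rw [Uop, show p ^ 2 * (t * (n / d) ^ 2) = t * (p * (n / d)) ^ 2 by ring]
  ring

/-- the Shimura lift intertwines U_p with W_p, for every prime p. -/
theorem shimura_lift_commutes_with_Tp2
    (k N : ℕ) (hk3 : 3 ≤ k) (hk : Odd k) (hN : 0 < N) (hN4 : 4 ∣ N)
    (χ : DirichletCharacter ℂ N) (a : ℕ → ℂ)
    (t : ℕ) (ht0 : 0 < t) (ht : Squarefree t)
    (p : ℕ) [Fact p.Prime] (n : ℕ) (hn : 0 < n) :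
    ShLift k N χ t (Uop k N χ p a) n = Wop k N χ p (ShLift k N χ t a) n :=
  shimura_lift_commutes_with_Tp2_general k N hN4 χ a t ht p n
end

section
/- Let p be an odd prime, α a positive integer, and n a positive integer of the form n = p^{α−1}·n′ for a positive integer n′. Then ∑_{m=0}^{p^α − 1} (m ∣ p)·exp(2πi·m·n/p^α) = p^{α−1}·(n′ ∣ p)·ε_p·√p, where ε_p = 1 if p ≡ 1 (mod 4) and ε_p = i if p ≡ 3 (mod 4). -/
/-!
The quadratic Gauss sum is evaluated through the Jacobi theta function: the limit of
`√t θ(0, 2/q + it)` as `t → 0⁺` is computed in two ways. Splitting the theta series by residues mod `q` and applying the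
functional equation to each piece gives `(1/q) ∑_{r<q} e(r²/q)`. Applying the functional equation
first, then splitting mod 2 and applying it again, lands on a vertical line at real part
`-1/(2q)` and gives `e^{πi/4} (1 + (-i)^q) / √(2q)`. Hence `∑_{r<q} e(r²/q) = (1+i)(1+(-i)^q)/2 · √q`.

For the theorem, the summand depends on `m` only modulo `p`, so the sum is `p^{α-1}` times a Gauss
sum of the Legendre symbol, which equals `(n' ∣ p) ∑_x e(x²/p)`.
-/

open Finset Complex Filter Topology
open scoped Real

lemma ZMod.sum_range_mul_natCast {M : Type*} [AddCommMonoid M] (k q : ℕ) [NeZero q]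
    (g : ZMod q → M) : ∑ m ∈ range (k * q), g m = k • ∑ x, g x := by
  have hprod : k • ∑ x, g x = ∑ x ∈ univ ×ˢ range k, g x.1 := by
    simp [sum_product, smul_sum]
  rw [hprod]
  refine sum_nbij' (Nat.residueClassesEquiv q) (Nat.residueClassesEquiv q).symm ?_ ?_
    (fun m _ => (Nat.residueClassesEquiv q).symm_apply_apply m)
    (fun x _ => (Nat.residueClassesEquiv q).apply_symm_apply x) (fun m _ => rfl)
  · intro m hm
    rw [mem_range] at hm
    simp [Nat.residueClassesEquiv, Nat.div_lt_iff_lt_mul (NeZero.pos q), hm]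
  · rintro ⟨x, j⟩ hx
    rw [mem_product, mem_range] at hx
    simp only [Nat.residueClassesEquiv, Equiv.coe_fn_symm_mk, mem_range]
    nlinarith [ZMod.val_lt x]

namespace Complex

lemma ofReal_cpow_one_half {x : ℝ} (hx : 0 ≤ x) : (x : ℂ) ^ (1 / 2 : ℂ) = √x := by
  rw [Real.sqrt_eq_rpow, ofReal_cpow hx]
  norm_num

lemma mul_cpow_of_arg_add_mem_Ioc {z w : ℂ} (hz : z ≠ 0) (hw : w ≠ 0)
    (h : z.arg + w.arg ∈ Set.Ioc (-π) π) (s : ℂ) : (z * w) ^ s = z ^ s * w ^ s := by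
  simp only [cpow_def_of_ne_zero hz, cpow_def_of_ne_zero hw,
    cpow_def_of_ne_zero (mul_ne_zero hz hw), log_mul hz hw h, add_mul, Complex.exp_add]

lemma neg_I_cpow_one_half : (-I) ^ (1 / 2 : ℂ) = cexp (-(π * I / 4)) := by
  rw [cpow_def_of_ne_zero (neg_ne_zero.mpr I_ne_zero), log_neg_I]
  ring_nf

lemma mul_cpow_of_re_pos {z w : ℂ} (hz : 0 < z.re) (hw : 0 < w.re) (s : ℂ) :
    (z * w) ^ s = z ^ s * w ^ s := by
  have hz' := abs_lt.mp (abs_arg_lt_pi_div_two_iff.mpr (Or.inl hz))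
  have hw' := abs_lt.mp (abs_arg_lt_pi_div_two_iff.mpr (Or.inl hw))
  exact mul_cpow_of_arg_add_mem_Ioc (fun h => by simp [h] at hz) (fun h => by simp [h] at hw)
    ⟨by linarith, by linarith⟩ s

lemma ofReal_mul_neg_I_cpow_one_half {x : ℝ} (hx : 0 < x) :
    (x * -I) ^ (1 / 2 : ℂ) = √x * cexp (-(π * I / 4)) := by
  rw [mul_cpow_of_arg_add_mem_Ioc (ofReal_ne_zero.mpr hx.ne') (neg_ne_zero.mpr I_ne_zero)
      (by rw [arg_ofReal_of_nonneg hx.le, arg_neg_I]; constructor <;> linarith [Real.pi_pos]),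
    ofReal_cpow_one_half hx.le, neg_I_cpow_one_half]

lemma neg_I_pow_eq_exp (q : ℕ) : (-I) ^ q = cexp (-(π * I * q / 2)) := by
  rw [show -(π * I * q / 2) = q * -(π / 2 * I) by ring, Complex.exp_nat_mul, Complex.exp_neg,
    exp_pi_div_two_mul_I, inv_I]

lemma exp_pi_mul_I_div_four : cexp (π * I / 4) = (1 + I) / √2 := by
  rw [show π * I / 4 = ((π / 4 : ℝ) : ℂ) * I by push_cast; ring, exp_mul_I, ← ofReal_cos,
    ← ofReal_sin, Real.cos_pi_div_four, Real.sin_pi_div_four]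
  have h2 : (√2 : ℂ) * √2 = 2 := by rw [← ofReal_mul, Real.mul_self_sqrt zero_le_two]; norm_num
  push_cast
  field_simp
  linear_combination (1 + I) * h2

lemma one_add_I_mul_one_add_neg_I_pow_div_two_of_odd {q : ℕ} (hq : Odd q) :
    (1 + I) * (1 + (-I) ^ q) / 2 = if q % 4 = 1 then 1 else I := by
  have h4 : (-I) ^ q = (-I) ^ (q % 4) := by
    rw [← Nat.div_add_mod q 4, pow_add, pow_mul]
    norm_num
  have : q % 4 = 1 ∨ q % 4 = 3 := by rcases hq with ⟨k, rfl⟩; omega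
  rcases this with h | h
  · rw [h4, h, if_pos rfl]
    ring_nf; rw [I_sq]; ring
  · rw [h4, h, if_neg (by norm_num)]
    ring_nf; rw [I_pow_three, I_pow_four]; ring

end Complex

lemma jacobiTheta₂_add_int_left (z τ : ℂ) (n : ℤ) : jacobiTheta₂ (z + n) τ = jacobiTheta₂ z τ := by
  simpa using Function.Periodic.int_mul (f := (jacobiTheta₂ · τ))
    (fun z => jacobiTheta₂_add_left z τ) n z

lemma jacobiTheta₂_add_int_mul_two_right (z τ : ℂ) (n : ℤ) :
    jacobiTheta₂ z (τ + n * 2) = jacobiTheta₂ z τ :=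
  Function.Periodic.int_mul (f := jacobiTheta₂ z) (fun τ => jacobiTheta₂_add_right z τ) n τ

lemma jacobiTheta₂_term_mul_add (k r m : ℤ) (z τ : ℂ) :
    jacobiTheta₂_term (m * k + r) z τ = cexp (2 * π * I * r * z + π * I * r ^ 2 * τ) *
      jacobiTheta₂_term m (k * z + k * r * τ) (k ^ 2 * τ) := by
  simp only [jacobiTheta₂_term, ← Complex.exp_add]
  push_cast
  ring_nf

lemma jacobiTheta₂_eq_sum_range (k : ℕ) [NeZero k] (z τ : ℂ) :
    jacobiTheta₂ z τ = ∑ r ∈ range k, cexp (2 * π * I * r * z + π * I * r ^ 2 * τ) *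
      jacobiTheta₂ (k * z + k * r * τ) (k ^ 2 * τ) := by
  have hk : (0 : ℝ) < (k : ℝ) ^ 2 := by have := NeZero.pos k; positivity
  have him : (k ^ 2 * τ : ℂ).im = k ^ 2 * τ.im := by
    rw [show (k : ℂ) ^ 2 = ((k ^ 2 : ℝ) : ℂ) by push_cast; rfl, im_ofReal_mul]
  rcases le_or_gt τ.im 0 with hτ | hτ
  · have hkτ : (k ^ 2 * τ : ℂ).im ≤ 0 := him ▸ mul_nonpos_of_nonneg_of_nonpos hk.le hτ
    simp [jacobiTheta₂_undef _ hτ, jacobiTheta₂_undef _ hkτ]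
  have hkτ : 0 < (k ^ 2 * τ : ℂ).im := him ▸ mul_pos hk hτ
  rw [sum_range]
  refine ((hasSum_fintype _).unique ?_).symm
  refine HasSum.prod_fiberwise
    (f := fun rm : Fin k × ℤ => jacobiTheta₂_term (rm.2 * k + rm.1) z τ) ?_ fun r => ?_
  · exact (((Int.divModEquiv k).trans (Equiv.prodComm _ _)).symm.hasSum_iff).mpr
      (hasSum_jacobiTheta₂_term z hτ)
  · simp_rw [jacobiTheta₂_term_mul_add k r]
    exact_mod_cast (hasSum_jacobiTheta₂_term _ hkτ).mul_left _

lemma tendsto_jacobiTheta₂_comap_im_atTop (z : ℂ) :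
    Tendsto (jacobiTheta₂ z) (comap im atTop) (𝓝 1) := by
  rw [show (1 : ℂ) = ∑' n : ℤ, if n = 0 then 1 else 0 from (tsum_ite_eq 0 fun _ => 1).symm]
  refine tendsto_tsum_of_dominated_convergence (bound := fun n => ‖jacobiTheta₂_term n z I‖)
    ((summable_jacobiTheta₂_term_iff z I).mpr (by simp)).norm (fun n => ?_) ?_
  · rcases eq_or_ne n 0 with rfl | hn
    · simpa [jacobiTheta₂_term] using tendsto_const_nhds
    have hn2 : 0 < π * (n : ℝ) ^ 2 := by positivity
    rw [if_neg hn, tendsto_zero_iff_norm_tendsto_zero]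
    simp_rw [norm_jacobiTheta₂_term]
    refine Real.tendsto_exp_atBot.comp ?_
    simp_rw [sub_eq_add_neg]
    refine tendsto_atBot_add_const_right _ _ ((tendsto_neg_atTop_atBot.comp
      (tendsto_comap.const_mul_atTop hn2)).congr fun τ => ?_)
    simp [mul_assoc]
  · filter_upwards [tendsto_comap.eventually (eventually_ge_atTop 1)] with τ hτ n
    rw [norm_jacobiTheta₂_term, norm_jacobiTheta₂_term, Real.exp_le_exp, I_im]
    nlinarith [mul_nonneg Real.pi_pos.le (sq_nonneg (n : ℝ))]

lemma tendsto_add_I_div_mul_nhdsGT_zero (x : ℂ) {c : ℝ} (hc : 0 < c) :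
    Tendsto (fun t : ℝ => x + I / (c * t)) (𝓝[>] 0) (comap im atTop) := by
  refine tendsto_comap_iff.mpr (tendsto_atTop_add_const_left _ x.im
    ((tendsto_inv_nhdsGT_zero.const_mul_atTop (inv_pos.mpr hc)).congr fun t => ?_))
  rw [show I / (c * t) = ((c⁻¹ * t⁻¹ : ℝ) : ℂ) * I by push_cast; ring]
  simp

/-- After splitting mod `q` and shifting by the periods, each piece is theta on the imaginary axis,
and the Gaussian factors produced by the functional equation cancel exactly. -/
lemma sqrt_mul_jacobiTheta₂_two_div_add_eq_sum_range (q : ℕ) [NeZero q] {t : ℝ} (ht : 0 < t) :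
    √t * jacobiTheta₂ 0 (2 / q + t * I) =
      (∑ r ∈ range q, cexp (2 * π * I * r ^ 2 / q) * jacobiTheta₂ (r / q) (I / (q ^ 2 * t))) / q := by
  have hq : (q : ℂ) ≠ 0 := NeZero.ne _
  have htC : (t : ℂ) ≠ 0 := ofReal_ne_zero.mpr ht.ne'
  rw [jacobiTheta₂_eq_sum_range q, mul_sum, sum_div]
  refine sum_congr rfl fun r _ => ?_
  have hz : q * 0 + q * r * (2 / q + t * I) = (q * r * t) * I + (2 * r : ℤ) := by
    push_cast; field_simp; ring
  have hτ : q ^ 2 * (2 / q + t * I) = (q ^ 2 * t) * I + (q : ℤ) * 2 := by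
    push_cast; field_simp; ring
  rw [hz, hτ, jacobiTheta₂_add_int_left, jacobiTheta₂_add_int_mul_two_right,
    jacobiTheta₂_functional_equation]
  have hsq : (-I * ((q ^ 2 * t) * I)) ^ (1 / 2 : ℂ) = q * √t := by
    rw [show -I * ((q ^ 2 * t) * I) = ((q ^ 2 * t : ℝ) : ℂ) by push_cast; ring_nf; simp,
      ofReal_cpow_one_half (by positivity), Real.sqrt_mul (by positivity),
      Real.sqrt_sq q.cast_nonneg]
    push_cast; ring
  have hexp : cexp (2 * π * I * r * 0 + π * I * r ^ 2 * (2 / q + t * I)) *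
      cexp (-π * I * (q * r * t * I) ^ 2 / (q ^ 2 * t * I)) = cexp (2 * π * I * r ^ 2 / q) := by
    rw [← Complex.exp_add]; congr 1; field_simp; ring_nf
  have hs : (√t : ℂ) ≠ 0 := ofReal_ne_zero.mpr (Real.sqrt_pos.mpr ht).ne'
  rw [hsq, show (q * r * t * I) / (q ^ 2 * t * I) = (r / q : ℂ) by field_simp,
    show -1 / (q ^ 2 * t * I) = I / (q ^ 2 * t) by field_simp; ring_nf; simp, ← hexp]
  field_simp

lemma jacobiTheta₂_zero_div_four_sub_half (q : ℕ) {μ : ℂ} (hμ : μ ≠ 0) :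
    jacobiTheta₂ 0 (μ / 4 - q / 2) = (jacobiTheta₂ 0 (-1 / μ) +
      (-I) ^ q * jacobiTheta₂ (1 / 2) (-1 / μ)) / (-I * μ) ^ (1 / 2 : ℂ) := by
  rw [jacobiTheta₂_eq_sum_range 2, sum_range_succ, sum_range_one]
  have h4 : ((2 : ℕ) : ℂ) ^ 2 * (μ / 4 - q / 2) = μ + ((-q : ℤ) : ℂ) * 2 := by push_cast; ring
  have h2 : ((2 : ℕ) : ℂ) * 0 + (2 : ℕ) * ((1 : ℕ) : ℂ) * (μ / 4 - q / 2) =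
      μ / 2 + ((-q : ℤ) : ℂ) := by
    push_cast; ring
  rw [h4, h2, jacobiTheta₂_add_int_mul_two_right, jacobiTheta₂_add_int_left,
    jacobiTheta₂_add_int_mul_two_right, jacobiTheta₂_functional_equation _ μ,
    jacobiTheta₂_functional_equation (μ / 2) μ, div_div_cancel_left' hμ]
  have hexp : cexp (2 * π * I * (1 : ℕ) * 0 + π * I * (1 : ℕ) ^ 2 * (μ / 4 - q / 2)) *
      cexp (-π * I * (μ / 2) ^ 2 / μ) = (-I) ^ q := by
    rw [neg_I_pow_eq_exp, ← Complex.exp_add]; congr 1; field_simp; push_cast; ring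
  rw [← hexp]
  simp only [CharP.cast_eq_zero, mul_zero, ne_eq, OfNat.ofNat_ne_zero, not_false_eq_true, zero_pow,
    zero_mul, add_zero, exp_zero, neg_mul, one_div, Nat.cast_ofNat, zero_div, mul_one, one_mul,
    Nat.cast_one, one_pow, zero_add]
  ring

lemma sqrt_mul_jacobiTheta₂_two_div_add_eq_add_half (q : ℕ) [NeZero q] {t : ℝ} (ht : 0 < t) :
    √t * jacobiTheta₂ 0 (2 / q + t * I) = cexp (π * I / 4) / √(2 * q) *
      (jacobiTheta₂ 0 (-1 / (2 * q) + I / (q ^ 2 * t)) +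
        (-I) ^ q * jacobiTheta₂ (1 / 2) (-1 / (2 * q) + I / (q ^ 2 * t))) := by
  have hq : (q : ℂ) ≠ 0 := NeZero.ne _
  have hqR : (0 : ℝ) < q := Nat.cast_pos.mpr (NeZero.pos q)
  have htC : (t : ℂ) ≠ 0 := ofReal_ne_zero.mpr ht.ne'
  set τ : ℂ := 2 / q + t * I with hτ
  have hτre : τ.re = 2 / q := by simp [hτ]
  have hτim : τ.im = t := by simp [hτ]
  have hτ0 : τ ≠ 0 := fun h => ht.ne' (by rw [← hτim, h, zero_im])
  -- `μ` is chosen so that `-1/τ = μ/4 - q/2` and `-1/μ` has real part `-1/(2q)`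
  set μ : ℂ := 2 * q * t * I / τ with hμ
  have hμ0 : μ ≠ 0 := by simp [hμ, hq, htC, hτ0, I_ne_zero]
  have hσ : -1 / τ = μ / 4 - q / 2 := by
    rw [hμ]; field_simp; rw [hτ]; field_simp; ring
  have hν : -1 / μ = -1 / (2 * q) + I / (q ^ 2 * t) := by
    rw [hμ, hτ]; field_simp; ring_nf; rw [I_sq]; ring
  have hroot : (-I * τ) ^ (1 / 2 : ℂ) * (-I * μ) ^ (1 / 2 : ℂ) =
      √(2 * q * t) * cexp (-(π * I / 4)) := by
    have hμre : 0 < (-I * μ).re := by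
      rw [hμ, show -I * (2 * q * t * I / τ) = ((2 * q * t : ℝ) : ℂ) * τ⁻¹ by
          push_cast; ring_nf; simp,
        re_ofReal_mul, inv_re, hτre]
      have := normSq_pos.mpr hτ0
      positivity
    have hprod : -I * τ * (-I * μ) = ((2 * q * t : ℝ) : ℂ) * (-I) := by
      rw [hμ]; push_cast; field_simp; ring_nf; simp
    rw [← mul_cpow_of_re_pos (by simp [hτim, ht]) hμre, hprod,
      ofReal_mul_neg_I_cpow_one_half (by positivity)]
  have hs : (√t : ℂ) ≠ 0 := ofReal_ne_zero.mpr (Real.sqrt_pos.mpr ht).ne'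
  have hfactor : √t / ((-I * τ) ^ (1 / 2 : ℂ) * (-I * μ) ^ (1 / 2 : ℂ)) =
      cexp (π * I / 4) / √(2 * q) := by
    rw [hroot, Real.sqrt_mul (by positivity), ofReal_mul, Complex.exp_neg]
    field_simp
  rw [jacobiTheta₂_functional_equation 0 τ, hσ, zero_div,
    jacobiTheta₂_zero_div_four_sub_half q hμ0, hν, ← hfactor]
  simp only [neg_mul, one_div, ne_eq, OfNat.ofNat_ne_zero, not_false_eq_true, zero_pow, mul_zero,
    zero_div, exp_zero, mul_one]
  ring

lemma sum_range_exp_two_pi_I_mul_sq_div (q : ℕ) [NeZero q] :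
    ∑ r ∈ range q, cexp (2 * π * I * r ^ 2 / q) = (1 + I) * (1 + (-I) ^ q) / 2 * √q := by
  have hq : (0 : ℝ) < q := Nat.cast_pos.mpr (NeZero.pos q)
  have hpoint (x : ℂ) :
      Tendsto (fun t : ℝ => x + I / (q ^ 2 * t)) (𝓝[>] 0) (comap im atTop) := by
    simpa using tendsto_add_I_div_mul_nhdsGT_zero x (pow_pos hq 2)
  have hθ (z x : ℂ) := (tendsto_jacobiTheta₂_comap_im_atTop z).comp (hpoint x)
  have hA : Tendsto (fun t : ℝ => √t * jacobiTheta₂ 0 (2 / q + t * I)) (𝓝[>] 0)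
      (𝓝 ((∑ r ∈ range q, cexp (2 * π * I * r ^ 2 / q)) / q)) := by
    have := (tendsto_finsetSum (range q) fun r _ =>
      ((hθ (r / q) 0).const_mul (cexp (2 * π * I * r ^ 2 / q)))).div_const (q : ℂ)
    simp only [mul_one, Function.comp_def, zero_add] at this
    exact this.congr' (eventually_nhdsWithin_of_forall fun t ht =>
      (sqrt_mul_jacobiTheta₂_two_div_add_eq_sum_range q ht).symm)
  have hB : Tendsto (fun t : ℝ => √t * jacobiTheta₂ 0 (2 / q + t * I)) (𝓝[>] 0)
      (𝓝 (cexp (π * I / 4) / √(2 * q) * (1 + (-I) ^ q))) := by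
    have := ((hθ 0 (-1 / (2 * q))).add ((hθ (1 / 2) (-1 / (2 * q))).const_mul ((-I) ^ q))).const_mul
      (cexp (π * I / 4) / √(2 * q))
    simp only [mul_one, Function.comp_def] at this
    exact this.congr' (eventually_nhdsWithin_of_forall fun t ht =>
      (sqrt_mul_jacobiTheta₂_two_div_add_eq_add_half q ht).symm)
  have h := tendsto_nhds_unique hA hB
  rw [div_eq_iff (by exact_mod_cast hq.ne'), exp_pi_mul_I_div_four] at h
  rw [h, Real.sqrt_mul zero_le_two, ofReal_mul]
  have hsq {x : ℝ} (hx : 0 ≤ x) : (√x : ℂ) * √x = x := by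
    rw [← ofReal_mul, Real.mul_self_sqrt hx]
  have h2 : (√2 : ℂ) * √2 = 2 := by simpa using hsq zero_le_two
  have hs : (√q : ℂ) ≠ 0 := by simp [hq.ne']
  field_simp
  linear_combination -(1 + I) * (1 + (-I) ^ q) * ((√q : ℂ) * √q * h2 + 2 * hsq hq.le)

lemma ZMod.sum_stdAddChar_sq (q : ℕ) [NeZero q] :
    ∑ x : ZMod q, stdAddChar (x ^ 2) = (1 + I) * (1 + (-I) ^ q) / 2 * √q := by
  rw [← sum_range_exp_two_pi_I_mul_sq_div, ← one_smul ℕ (∑ x : ZMod q, _),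
    ← sum_range_mul_natCast 1 q, one_mul]
  refine sum_congr rfl fun r _ => ?_
  rw [← Nat.cast_pow, stdAddChar_apply, toCircle_natCast]
  push_cast; rfl

section GaussSum

variable {F R : Type*} [Field F] [Fintype F] [CommRing R] [IsDomain R]

lemma gaussSum_mulShift_of_isQuadratic {χ : MulChar F R} (hχ : χ.IsQuadratic) (hχ₁ : χ ≠ 1)
    (ψ : AddChar F R) (a : F) : gaussSum χ (ψ.mulShift a) = χ a * gaussSum χ ψ := by
  rcases eq_or_ne a 0 with rfl | ha
  · rw [AddChar.mulShift_zero, gaussSum_one_right hχ₁, χ.map_zero, zero_mul]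
  · simpa [hχ.inv] using gaussSum_mulShift_eq χ ψ (Units.mk0 a ha)

/-- Each `y` has `1 + χ y` square roots, and `∑ ψ = 0`. -/
lemma gaussSum_quadraticChar_eq_sum_sq [DecidableEq F] (hF : ringChar F ≠ 2)
    {ψ : AddChar F R} (hψ : ψ ≠ 1) :
    gaussSum ((quadraticChar F).ringHomComp (Int.castRingHom R)) ψ = ∑ x, ψ (x ^ 2) := by
  have hfiber (y : F) :
      ∑ x with x ^ 2 = y, ψ (x ^ 2) = (quadraticChar F y + 1 : ℤ) * ψ y := by
    rw [sum_congr rfl fun x hx => congrArg ψ (mem_filter.mp hx).2, sum_const, nsmul_eq_mul,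
      ← quadraticChar_card_sqrts hF y, Set.toFinset_ofPred]
    push_cast; rfl
  rw [← sum_fiberwise univ (· ^ 2), sum_congr rfl fun y _ => hfiber y]
  simp [add_mul, sum_add_distrib, AddChar.sum_eq_zero_of_ne_one hψ, gaussSum]

end GaussSum

theorem gauss_sum_eval_general
    (p : ℕ) [Fact p.Prime] (hodd : p ≠ 2) (α n n' : ℕ) (hα : 0 < α)
    (hn : n = p ^ (α - 1) * n') :
    ∑ m ∈ Finset.range (p ^ α),
        ((legendreSym p (m : ℤ) : ℤ) : ℂ) *
          Complex.exp (2 * Real.pi * Complex.I * m * n / (p : ℂ) ^ α)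
      = (p : ℂ) ^ (α - 1) * ((legendreSym p (n' : ℤ) : ℤ) : ℂ) *
          (if p % 4 = 1 then 1 else Complex.I) * Real.sqrt p := by
  have hchar : ringChar (ZMod p) ≠ 2 := by rwa [ZMod.ringChar_zmod_n]
  set χ := (quadraticChar (ZMod p)).ringHomComp (Int.castRingHom ℂ)
  set ψ : AddChar (ZMod p) ℂ := ZMod.stdAddChar
  have hψ : ψ ≠ 1 := by simpa using (ZMod.isPrimitive_stdAddChar p) one_ne_zero
  have hpα : p ^ α = p ^ (α - 1) * p := by rw [← pow_succ, Nat.sub_add_cancel hα]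
  have hterm (m : ℕ) : ((legendreSym p m : ℤ) : ℂ) * cexp (2 * π * I * m * n / (p : ℂ) ^ α) =
      χ m * ψ.mulShift n' m := by
    have hp : (p : ℂ) ≠ 0 := NeZero.ne _
    rw [AddChar.mulShift_apply, ← Nat.cast_mul, ZMod.stdAddChar_apply, ZMod.toCircle_natCast, hn,
      show (p : ℂ) ^ α = p ^ (α - 1) * p by exact_mod_cast congrArg (Nat.cast (R := ℂ)) hpα]
    simp only [legendreSym, Int.cast_natCast]
    congr 2
    push_cast
    field_simp
  calc _ = ∑ m ∈ range (p ^ (α - 1) * p), χ m * ψ.mulShift n' m := by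
        rw [← hpα]; exact sum_congr rfl fun m _ => hterm m
    _ = p ^ (α - 1) • gaussSum χ (ψ.mulShift n') :=
        ZMod.sum_range_mul_natCast _ _ fun x => χ x * ψ.mulShift n' x
    _ = p ^ (α - 1) • (χ n' * ∑ x, ψ (x ^ 2)) := by
        rw [gaussSum_mulShift_of_isQuadratic ((quadraticChar_isQuadratic _).comp _)
          ((MulChar.ringHomComp_ne_one_iff Int.cast_injective).mpr (quadraticChar_ne_one hchar)),
          gaussSum_quadraticChar_eq_sum_sq hchar hψ]
    _ = _ := by
        rw [ZMod.sum_stdAddChar_sq, ← one_add_I_mul_one_add_neg_I_pow_div_two_of_odd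
          ((Fact.out : p.Prime).odd_of_ne_two hodd)]
        simp only [MulChar.ringHomComp_apply, quadraticChar_apply, eq_intCast, nsmul_eq_mul,
          Nat.cast_pow, legendreSym, Int.cast_natCast, χ]
        ring

/-- for p an odd prime, α ≥ 1 and n = p^{α−1}·n′ with n′ ≥ 1,
    ∑_{m=0}^{p^α − 1} (m ∣ p)·exp(2πi·m·n/p^α) = p^{α−1}·(n′ ∣ p)·ε_p·√p,
    where ε_p = 1 if p ≡ 1 (mod 4) and ε_p = i if p ≡ 3 (mod 4). -/
theorem gauss_sum_eval
    (p : ℕ) [Fact p.Prime] (hodd : p ≠ 2) (α n n' : ℕ) (hα : 0 < α) (hn' : 0 < n')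
    (hn : n = p ^ (α - 1) * n') :
    ∑ m ∈ Finset.range (p ^ α),
        ((legendreSym p (m : ℤ) : ℤ) : ℂ) *
          Complex.exp (2 * Real.pi * Complex.I * m * n / (p : ℂ) ^ α)
      = (p : ℂ) ^ (α - 1) * ((legendreSym p (n' : ℤ) : ℤ) : ℂ) *
          (if p % 4 = 1 then 1 else Complex.I) * Real.sqrt p :=
  gauss_sum_eval_general p hodd α n n' hα hn
end

section
/- Let ℓ and r be integers with 2 ≤ r ≤ ⌊ℓ/2⌋ − 1. Then α_{r−1,ℓ−2} + α_{r,ℓ} − α_{r,ℓ−1} = 0. -/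
/-- Binomial coefficient C(n, j) for integers, taken to be 0 when j < 0 or j > n. -/
def Cb (n j : ℤ) : ℤ := if 0 ≤ j ∧ j ≤ n then (n.toNat).choose j.toNat else 0

/-- The sequence A_{r,ℓ}(m): A_{1,ℓ}(m) = 1 and, for r ≥ 2,
    A_{r,ℓ}(m) = A_{r−1,ℓ}(m) − C(ℓ−2(r−1), m−(r−1))·A_{r−1,ℓ}(r−1). -/
def Aseq (ℓ : ℕ) : ℕ → ℤ → ℤ
  | 0, _ => 1
  | 1, _ => 1
  | (r + 2), m =>
      Aseq ℓ (r + 1) m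
        - Cb ((ℓ : ℤ) - 2 * (r + 1)) (m - (r + 1)) * Aseq ℓ (r + 1) ((r : ℤ) + 1)

/-- α_{r,ℓ} = A_{r,ℓ}(r). -/
def alphaSeq (ℓ r : ℕ) : ℤ := Aseq ℓ r r

/-!
Unwinding the recursion gives `α_{s+1} = 1 - ∑_{k<s} C(ℓ-2k-2, s-k) α_{k+1}`. Writing `ℓ = n + 2`
and using `C(n-k, k) C(n-2k, s-k) = C(s, k) C(n-k, s)`, the ansatz `α_{s+1} = (-1)^s C(n-s, s)`
turns this recursion into the fact that the `s`-th backward difference of `x ↦ C(x, s)` is `1`,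
so the ansatz holds for all `s ≤ n`. The identity is then Pascal's rule
`C(n-s+1, s+1) = C(n-s, s) + C(n-s, s+1)`.
-/

open Finset

lemma Cb_natCast (n k : ℕ) : Cb n k = n.choose k := by
  unfold Cb
  split_ifs with h
  · simp
  · rw [Nat.choose_eq_zero_of_lt (by omega), Nat.cast_zero]

lemma Cb_of_neg (n j : ℤ) (hn : n < 0) : Cb n j = 0 :=
  if_neg (by omega)

theorem alternating_sum_choose_mul_choose_sub {n s : ℕ} (h : s ≤ n) :
    ∑ k ∈ range (s + 1), (-1) ^ k * (s.choose k : ℤ) * (n - k).choose s = 1 := by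
  have hdiff := fwdDiff_iter_eq_sum_shift 1 (fun x ↦ (x.choose (s + 0) : ℤ)) s (n - s)
  rw [fwdDiff_iter_choose, ← sum_range_reflect] at hdiff
  simp only [Nat.choose_zero_right, Nat.cast_one, smul_eq_mul, mul_one, add_zero] at hdiff
  refine (sum_congr rfl fun k hk ↦ ?_).trans hdiff.symm
  have hk : k ≤ s := Nat.lt_succ_iff.mp (mem_range.mp hk)
  rw [show s - (s + 1 - 1 - k) = k by omega, show n - s + (s + 1 - 1 - k) = n - k by omega,
    show s + 1 - 1 - k = s - k by omega, Nat.choose_symm hk]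

lemma Cb_mul_choose {n s k : ℕ} (hk : k ≤ s) :
    Cb ((n : ℤ) - 2 * k) ((s : ℤ) - k) * (n - k).choose k = s.choose k * (n - k).choose s := by
  rcases le_or_gt (2 * k) n with hn | hn
  · rw [show (n : ℤ) - 2 * k = ((n - k - k : ℕ) : ℤ) by omega,
      show (s : ℤ) - k = ((s - k : ℕ) : ℤ) by omega, Cb_natCast]
    rw [mul_comm, mul_comm (s.choose k : ℤ)]
    exact_mod_cast (Nat.choose_mul hk).symm
  · rw [Cb_of_neg _ _ (by omega), Nat.choose_eq_zero_of_lt (by omega : n - k < s)]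
    simp

lemma Aseq_succ_eq_one_sub_sum (ℓ r : ℕ) (m : ℤ) :
    Aseq ℓ (r + 1) m
      = 1 - ∑ k ∈ range r, Cb (ℓ - 2 * (k + 1)) (m - (k + 1)) * alphaSeq ℓ (k + 1) := by
  induction r with
  | zero => simp [Aseq]
  | succ r ih =>
    rw [sum_range_succ, ← sub_sub, ← ih]
    simp only [Aseq, alphaSeq]
    push_cast
    ring

theorem alphaSeq_eq_neg_one_pow_mul_choose {n s : ℕ} (h : s ≤ n) :
    alphaSeq (n + 2) (s + 1) = (-1) ^ s * (n - s).choose s := by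
  induction s using Nat.strong_induction_on with
  | _ s ih =>
    have hterm : ∀ k ∈ range s,
        Cb ((n + 2 : ℕ) - 2 * (k + 1)) ((s + 1 : ℕ) - (k + 1)) * alphaSeq (n + 2) (k + 1)
          = (-1) ^ k * (s.choose k : ℤ) * (n - k).choose s := by
      intro k hk
      have hks : k < s := mem_range.mp hk
      rw [show ((n + 2 : ℕ) : ℤ) - 2 * (k + 1) = n - 2 * k by push_cast; ring,
        show ((s + 1 : ℕ) : ℤ) - (k + 1) = s - k by push_cast; ring,
        ih k hks (by omega), mul_left_comm, mul_assoc, ← Cb_mul_choose hks.le]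
    have key := alternating_sum_choose_mul_choose_sub h
    rw [sum_range_succ, Nat.choose_self, Nat.cast_one, mul_one] at key
    rw [alphaSeq, Aseq_succ_eq_one_sub_sum, sum_congr rfl hterm]
    linarith

/-- for integers 2 ≤ r ≤ ⌊ℓ/2⌋ − 1,
    α_{r−1,ℓ−2} + α_{r,ℓ} − α_{r,ℓ−1} = 0. -/
theorem alpha_combinatorial_identity (ℓ r : ℕ) (hr : 2 ≤ r) (hrl : r ≤ ℓ / 2 - 1) :
    alphaSeq (ℓ - 2) (r - 1) + alphaSeq ℓ r - alphaSeq (ℓ - 1) r = 0 := by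
  obtain ⟨s, rfl⟩ : ∃ s, r = s + 2 := ⟨r - 2, by omega⟩
  obtain ⟨n, rfl⟩ : ∃ n, ℓ = n + 4 := ⟨ℓ - 4, by omega⟩
  have hs : s ≤ n := by omega
  rw [show n + 4 - 2 = n + 2 by rfl, show n + 4 - 1 = (n + 1) + 2 by rfl,
    show n + 4 = (n + 2) + 2 by rfl, show s + 2 - 1 = s + 1 by rfl,
    alphaSeq_eq_neg_one_pow_mul_choose hs,
    alphaSeq_eq_neg_one_pow_mul_choose (by omega : s + 1 ≤ n + 2),
    alphaSeq_eq_neg_one_pow_mul_choose (by omega : s + 1 ≤ n + 1),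
    show n + 2 - (s + 1) = (n - s) + 1 by omega, show n + 1 - (s + 1) = n - s by omega,
    Nat.choose_succ_succ']
  push_cast
  ring
end

section
/- Let k ≥ 3 be an odd integer, λ = (k−1)/2, N a positive integer with 4 ∣ N, and χ a Dirichlet character modulo N with values in ℂ. Let p be a prime not dividing N, a : ℕ → ℂ, ℓ a positive integer, and n a positive integer with p^{2(ℓ−1)} ∣ n. Then the ℓ-fold iterate satisfies (U_p^ℓ a)(n) = a(n·p^{2ℓ}) + ∑_{m=1}^{ℓ−1} C(ℓ,m)·χ(p)^{2m}·p^{(k−2)m}·a⟨n·p^{2ℓ−4m}⟩ + χ(p)^{2ℓ−1}·((−1)^λ·(n/p^{2ℓ−2}) ∣ p)·p^{(k−3)/2 + (k−2)(ℓ−1)}·a(n/p^{2ℓ−2}) + χ(p)^{2ℓ}·p^{(k−2)ℓ}·[a(n/p^{2ℓ}) if p^{2ℓ} ∣ n, else 0], where C(ℓ,m) is the binomial coefficient and a⟨n·p^{2ℓ−4m}⟩ means a(n·p^{2ℓ−4m}) if 4m ≤ 2ℓ, and a(n/p^{4m−2ℓ}) if 4m > 2ℓ (this quotient is an integer since 4m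 − 2ℓ ≤ 2(ℓ−1) and p^{2(ℓ−1)} ∣ n). -/
open Finset

/-- The coefficients of `f(p² z)`, if `a` is the coefficient sequence of `f`. -/
def divSq (p : ℕ) (a : ℕ → ℂ) (n : ℕ) : ℂ :=
  if p ^ 2 ∣ n then a (n / p ^ 2) else 0

lemma divSq_pow_two_mul {p : ℕ} (hp : 0 < p) (a : ℕ → ℂ) (n : ℕ) :
    divSq p a (p ^ 2 * n) = a n := by
  simp [divSq, Nat.mul_div_cancel_left n (pow_pos hp 2)]

lemma divSq_eq_ite_mul {p q : ℕ} (hq : 0 < q) (a : ℕ → ℂ) (t : ℕ) :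
    divSq p a t = if q * p ^ 2 ∣ q * t then a (q * t / (q * p ^ 2)) else 0 := by
  simp only [divSq, Nat.mul_dvd_mul_iff_left hq, Nat.mul_div_mul_left _ _ hq]

lemma ite_mul_pow_sub_div_pow_sub {p : ℕ} (hp : 0 < p) {g e f : ℕ} (h : f ≤ g + e) (t : ℕ) :
    (if f ≤ e then p ^ g * t * p ^ (e - f) else p ^ g * t / p ^ (f - e))
      = p ^ (g + e - f) * t := by
  split_ifs with hfe
  · rw [mul_right_comm, ← pow_add, Nat.add_sub_assoc hfe]
  · rw [show p ^ g * t = p ^ (f - e) * (p ^ (g + e - f) * t) by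
      rw [← mul_assoc, ← pow_add]; congr 2; omega, Nat.mul_div_cancel_left _ (pow_pos hp _)]

lemma legendreSym_mul_eq_zero_of_dvd (p : ℕ) [Fact p.Prime] (u : ℤ) {n : ℕ} (h : p ∣ n) :
    legendreSym p (u * n) = 0 := by
  obtain ⟨m, rfl⟩ := h
  simp [legendreSym.eq_zero_iff]

lemma divSq_pow_mul_eq_ite {p : ℕ} (hp : 0 < p) (a : ℕ → ℂ) {j m : ℕ} (hmj : m ≤ j) (t : ℕ) :
    divSq p a (p ^ (4 * (j + 1 - m)) * t)
      = if 4 * m ≤ 2 * (j + 1) then a (p ^ (2 * j) * t * p ^ (2 * (j + 1) - 4 * m))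
        else a (p ^ (2 * j) * t / p ^ (4 * m - 2 * (j + 1))) := by
  rw [← apply_ite a, ite_mul_pow_sub_div_pow_sub hp (by omega),
    show p ^ (4 * (j + 1 - m)) * t = p ^ 2 * (p ^ (2 * j + 2 * (j + 1) - 4 * m) * t) by
      rw [← mul_assoc, ← pow_add]; congr 2; omega, divSq_pow_two_mul hp]

section Iterate

variable (k N : ℕ) (χ : DirichletCharacter ℂ N) (p : ℕ) [Fact p.Prime] (a : ℕ → ℂ)

lemma Uop_apply (n : ℕ) :
    Uop k N χ p a n
      = a (p ^ 2 * n)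
        + χ (p : ZMod N) * ((legendreSym p ((-1) ^ ((k - 1) / 2) * (n : ℤ)) : ℤ) : ℂ)
            * (p : ℂ) ^ ((k - 1) / 2 - 1) * a n
        + χ (p : ZMod N) ^ 2 * (p : ℂ) ^ (k - 2) * divSq p a n := rfl

lemma Uop_apply_of_dvd {n : ℕ} (h : p ∣ n) :
    Uop k N χ p a n = a (p ^ 2 * n) + χ (p : ZMod N) ^ 2 * (p : ℂ) ^ (k - 2) * divSq p a n := by
  simp [Uop_apply, legendreSym_mul_eq_zero_of_dvd p _ h]

/-- Writing the lowest terms through `divSq`, the final descent from `t` to `t / p²` is just the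
`m = j + 1` term of the binomial sum. -/
lemma Uop_iterate_succ_apply_pow_mul (j t : ℕ) :
    (Uop k N χ p)^[j + 1] a (p ^ (2 * j) * t)
      = ∑ m ∈ range (j + 2), ((j + 1).choose m : ℂ) *
          ((χ (p : ZMod N) ^ 2 * (p : ℂ) ^ (k - 2)) ^ m * divSq p a (p ^ (4 * (j + 1 - m)) * t))
        + (χ (p : ZMod N) ^ 2 * (p : ℂ) ^ (k - 2)) ^ j *
          (χ (p : ZMod N) * ((legendreSym p ((-1) ^ ((k - 1) / 2) * (t : ℤ)) : ℤ) : ℂ)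
            * (p : ℂ) ^ ((k - 1) / 2 - 1) * a t) := by
  have hp : 0 < p := (Fact.out : p.Prime).pos
  set c := χ (p : ZMod N) ^ 2 * (p : ℂ) ^ (k - 2)
  induction j generalizing t with
  | zero =>
    simp only [zero_add, mul_zero, pow_zero, one_mul, Function.iterate_one, Uop_apply,
      sum_range_succ, range_one, sum_singleton, Nat.choose_succ_self_right, Nat.cast_one,
      tsub_zero, mul_one, Nat.choose_self, pow_one, tsub_self, c]
    rw [show p ^ 4 * t = p ^ 2 * (p ^ 2 * t) by ring, divSq_pow_two_mul hp]
    ring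
  | succ j ih =>
    have hdvd : p ∣ p ^ (2 * (j + 1)) * t := Dvd.dvd.mul_right (dvd_pow_self p (by omega)) t
    rw [Function.iterate_succ_apply', Uop_apply_of_dvd (h := hdvd),
      show p ^ 2 * (p ^ (2 * (j + 1)) * t) = p ^ (2 * j) * (p ^ 4 * t) by ring,
      show p ^ (2 * (j + 1)) * t = p ^ 2 * (p ^ (2 * j) * t) by ring, divSq_pow_two_mul hp,
      ih, ih,
      legendreSym_mul_eq_zero_of_dvd p _ ((dvd_pow_self p four_ne_zero).mul_right t),
      sum_choose_succ_mul (fun m r => c ^ m * divSq p a (p ^ (4 * r) * t)) (j + 1)]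
    have hup : ∑ m ∈ range (j + 2), ((j + 1).choose m : ℂ) *
          (c ^ m * divSq p a (p ^ (4 * (j + 1 - m)) * (p ^ 4 * t)))
        = ∑ m ∈ range (j + 2), ((j + 1).choose m : ℂ) *
          (c ^ m * divSq p a (p ^ (4 * (j + 1 + 1 - m)) * t)) := by
      refine sum_congr rfl fun m hm => ?_
      rw [← mul_assoc (p ^ _), ← pow_add, show 4 * (j + 1 - m) + 4 = 4 * (j + 1 + 1 - m) by
        have := mem_range.mp hm; omega]
    have hdown : c * ∑ m ∈ range (j + 2), ((j + 1).choose m : ℂ) *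
          (c ^ m * divSq p a (p ^ (4 * (j + 1 - m)) * t))
        = ∑ m ∈ range (j + 2), ((j + 1).choose m : ℂ) *
          (c ^ (m + 1) * divSq p a (p ^ (4 * (j + 1 - m)) * t)) := by
      rw [mul_sum]
      exact sum_congr rfl fun m _ => by ring
    rw [hup]
    linear_combination hdown

end Iterate

theorem Up_iterate_coeff_formula_general
    (k N : ℕ)
    (χ : DirichletCharacter ℂ N) (p : ℕ) [Fact p.Prime]
    (a : ℕ → ℂ) (ℓ : ℕ) (hℓ : 0 < ℓ) (n : ℕ)
    (hdvd : p ^ (2 * (ℓ - 1)) ∣ n) :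
    (Uop k N χ p)^[ℓ] a n
      = a (n * p ^ (2 * ℓ))
        + ∑ m ∈ Finset.Icc 1 (ℓ - 1),
            (Nat.choose ℓ m : ℂ) * χ (p : ZMod N) ^ (2 * m) * (p : ℂ) ^ ((k - 2) * m) *
              (if 4 * m ≤ 2 * ℓ then a (n * p ^ (2 * ℓ - 4 * m))
               else a (n / p ^ (4 * m - 2 * ℓ)))
        + χ (p : ZMod N) ^ (2 * ℓ - 1) *
            ((legendreSym p
                ((-1) ^ ((k - 1) / 2) * ((n / p ^ (2 * ℓ - 2) : ℕ) : ℤ)) : ℤ) : ℂ) *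
            (p : ℂ) ^ ((k - 3) / 2 + (k - 2) * (ℓ - 1)) * a (n / p ^ (2 * ℓ - 2))
        + χ (p : ZMod N) ^ (2 * ℓ) * (p : ℂ) ^ ((k - 2) * ℓ) *
            (if p ^ (2 * ℓ) ∣ n then a (n / p ^ (2 * ℓ)) else 0) := by
  have hp : 0 < p := (Fact.out : p.Prime).pos
  obtain ⟨j, rfl⟩ : ∃ j, ℓ = j + 1 := ⟨ℓ - 1, by omega⟩
  obtain ⟨t, rfl⟩ := hdvd
  simp only [Nat.add_sub_cancel, show 2 * (j + 1) - 2 = 2 * j by omega,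
    show 2 * (j + 1) - 1 = 2 * j + 1 by omega, show (k - 3) / 2 = (k - 1) / 2 - 1 by omega,
    Nat.mul_div_cancel_left t (pow_pos hp _)]
  rw [Uop_iterate_succ_apply_pow_mul, sum_range_succ,
    sum_range_eq_add_Ico _ (Nat.add_one_pos j), Ico_add_one_right_eq_Icc]
  simp only [Nat.sub_zero, Nat.sub_self, mul_zero, pow_zero, one_mul, Nat.choose_zero_right,
    Nat.choose_self, Nat.cast_one]
  have hfirst : divSq p a (p ^ (4 * (j + 1)) * t) = a (p ^ (2 * j) * t * p ^ (2 * (j + 1))) := by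
    rw [show p ^ (4 * (j + 1)) * t = p ^ 2 * (p ^ (2 * j) * t * p ^ (2 * (j + 1))) by ring,
      divSq_pow_two_mul hp]
  have hlast : divSq p a t = if p ^ (2 * (j + 1)) ∣ p ^ (2 * j) * t
      then a (p ^ (2 * j) * t / p ^ (2 * (j + 1))) else 0 := by
    rw [mul_add, mul_one, pow_add, divSq_eq_ite_mul (pow_pos hp (2 * j))]
  have hmid : ∑ m ∈ Icc 1 j, ((j + 1).choose m : ℂ) *
        ((χ (p : ZMod N) ^ 2 * (p : ℂ) ^ (k - 2)) ^ m * divSq p a (p ^ (4 * (j + 1 - m)) * t))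
      = ∑ m ∈ Icc 1 j,
          ((j + 1).choose m : ℂ) * χ (p : ZMod N) ^ (2 * m) * (p : ℂ) ^ ((k - 2) * m) *
          (if 4 * m ≤ 2 * (j + 1) then a (p ^ (2 * j) * t * p ^ (2 * (j + 1) - 4 * m))
           else a (p ^ (2 * j) * t / p ^ (4 * m - 2 * (j + 1)))) :=
    sum_congr rfl fun m hm => by rw [divSq_pow_mul_eq_ite hp a (mem_Icc.mp hm).2]; ring
  rw [hfirst, hmid, hlast]
  ring

/-- explicit formula for (U_p^ℓ a)(n) when p ∤ N and p^{2(ℓ−1)} ∣ n. -/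
theorem Up_iterate_coeff_formula
    (k N : ℕ) (hk3 : 3 ≤ k) (hk : Odd k) (hN : 0 < N) (hN4 : 4 ∣ N)
    (χ : DirichletCharacter ℂ N) (p : ℕ) [Fact p.Prime] (hpN : ¬ p ∣ N)
    (a : ℕ → ℂ) (ℓ : ℕ) (hℓ : 0 < ℓ) (n : ℕ) (hn : 0 < n)
    (hdvd : p ^ (2 * (ℓ - 1)) ∣ n) :
    (Uop k N χ p)^[ℓ] a n
      = a (n * p ^ (2 * ℓ))
        + ∑ m ∈ Finset.Icc 1 (ℓ - 1),
            (Nat.choose ℓ m : ℂ) * χ (p : ZMod N) ^ (2 * m) * (p : ℂ) ^ ((k - 2) * m) *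
              (if 4 * m ≤ 2 * ℓ then a (n * p ^ (2 * ℓ - 4 * m))
               else a (n / p ^ (4 * m - 2 * ℓ)))
        + χ (p : ZMod N) ^ (2 * ℓ - 1) *
            ((legendreSym p
                ((-1) ^ ((k - 1) / 2) * ((n / p ^ (2 * ℓ - 2) : ℕ) : ℤ)) : ℤ) : ℂ) *
            (p : ℂ) ^ ((k - 3) / 2 + (k - 2) * (ℓ - 1)) * a (n / p ^ (2 * ℓ - 2))
        + χ (p : ZMod N) ^ (2 * ℓ) * (p : ℂ) ^ ((k - 2) * ℓ) *
            (if p ^ (2 * ℓ) ∣ n then a (n / p ^ (2 * ℓ)) else 0) :=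
  Up_iterate_coeff_formula_general k N χ p a ℓ hℓ n hdvd
end

section
/- Let p be an odd prime, ℓ a positive integer, and n a positive integer. Then the product ( ∑_{m=0}^{p^{2ℓ−1} − 1} (m ∣ p)·exp(2πi·m·n/p^{2ℓ−1}) ) · ( ∑_{m′=0}^{p² − 1} exp(2πi·m′·n/p^{2ℓ}) ) = 0. -/
/-!
Write `e(x) = exp(2πix)` and `χ = (· ∣ p)`. Since `χ` has period `p`, splitting `m = i + p j`
factors the first sum as `(∑_{i<p} χ(i) e(in/p^{2ℓ-1})) · ∑_{j<p^{2ℓ-2}} e(jn/p^{2ℓ-2})`.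
If `p^{2ℓ-1} ∣ n` the first factor is `∑_{i<p} χ(i) = 0`; if `p^{2ℓ-2} ∤ n` the second factor is a
complete geometric sum over a nontrivial root of unity. In the remaining case `p^{2ℓ-2}` divides `n`
exactly, so the ratio `e(n/p^{2ℓ})` of the second sum is a nontrivial `p²`-th root of unity.
-/

open Finset Complex
open scoped Real

theorem Finset.sum_range_mul_eq_sum_sum {M : Type*} [AddCommMonoid M] (f : ℕ → M) (q K : ℕ) :
    ∑ m ∈ range (q * K), f m = ∑ j ∈ range K, ∑ i ∈ range q, f (i + q * j) := by
  induction K with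
  | zero => simp
  | succ K ih =>
    rw [Nat.mul_succ, sum_range_add, ih, sum_range_succ]
    simp only [add_comm]

theorem ZMod.sum_range_natCast_eq_sum {M : Type*} [AddCommMonoid M] (n : ℕ) [NeZero n]
    (f : ZMod n → M) : ∑ i ∈ range n, f i = ∑ x, f x :=
  sum_nbij' (fun i => (i : ZMod n)) ZMod.val (fun _ _ => mem_univ _)
    (fun x _ => mem_range.mpr x.val_lt) (fun _ hi => ZMod.val_cast_of_lt (mem_range.mp hi))
    (fun x _ => ZMod.natCast_zmod_val x) (fun _ _ => rfl)

theorem legendreSym.sum_range_eq_zero (p : ℕ) [Fact p.Prime] (hp : p ≠ 2) :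
    ∑ i ∈ range p, legendreSym p i = 0 := by
  have hchar : ringChar (ZMod p) ≠ 2 := by rwa [ZMod.ringChar_zmod_n]
  simpa [legendreSym] using
    (ZMod.sum_range_natCast_eq_sum p (quadraticChar (ZMod p))).trans (quadraticChar_sum_zero hchar)

theorem legendreSym.periodic_natCast (p : ℕ) [Fact p.Prime] :
    Function.Periodic (fun m : ℕ => legendreSym p m) p := fun m => by
  simp only [Nat.cast_add]
  rw [legendreSym.mod, Int.add_emod_right, ← legendreSym.mod]

theorem exp_two_pi_I_mul_div_eq_pow (M a b : ℕ) :
    exp (2 * π * I * a * b / M) = exp (2 * π * I / M) ^ (a * b) := by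
  rw [← exp_nat_mul]; push_cast; ring_nf

theorem exp_two_pi_I_mul_div_eq_one {M n : ℕ} (h : M ∣ n) (a : ℕ) :
    exp (2 * π * I * a * n / M) = 1 := by
  obtain ⟨c, rfl⟩ := h
  rcases eq_or_ne M 0 with rfl | hM
  · simp
  rw [exp_eq_one_iff]
  refine ⟨a * c, ?_⟩
  push_cast
  field_simp

theorem sum_range_exp_eq_zero {M n L : ℕ} (hM : M ≠ 0) (hL : M ∣ n * L) (hn : ¬ M ∣ n) :
    ∑ j ∈ range L, exp (2 * π * I * j * n / M) = 0 := by
  have hζ := isPrimitiveRoot_exp M hM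
  have hz : exp (2 * π * I / M) ^ n ≠ 1 := by rwa [ne_eq, hζ.pow_eq_one_iff_dvd]
  simp_rw [exp_two_pi_I_mul_div_eq_pow, mul_comm _ n, pow_mul]
  rw [geom_sum_eq hz, ← pow_mul, hζ.pow_eq_one_iff_dvd _ |>.mpr hL, sub_self, zero_div]

theorem sum_range_mul_exp_of_periodic {f : ℕ → ℂ} {q : ℕ} (hf : Function.Periodic f q)
    (K n : ℕ) :
    ∑ m ∈ range (q * K), f m * exp (2 * π * I * m * n / (q * K : ℕ))
      = (∑ i ∈ range q, f i * exp (2 * π * I * i * n / (q * K : ℕ)))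
        * ∑ j ∈ range K, exp (2 * π * I * j * n / K) := by
  rcases eq_or_ne q 0 with rfl | hq
  · simp
  rcases eq_or_ne K 0 with rfl | hK
  · simp
  rw [sum_range_mul_eq_sum_sum, sum_mul_sum, sum_comm]
  refine sum_congr rfl fun i _ => sum_congr rfl fun j _ => ?_
  have hfij : f (i + q * j) = f i := by simpa [mul_comm] using hf.nat_mul j i
  rw [hfij, mul_assoc (f i), ← exp_add]
  congr 2
  push_cast
  field_simp

theorem gauss_sum_product_vanishes_general
    (p : ℕ) [Fact p.Prime] (hodd : p ≠ 2) (ℓ n : ℕ) (hℓ : 0 < ℓ) :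
    (∑ m ∈ Finset.range (p ^ (2 * ℓ - 1)),
        ((legendreSym p (m : ℤ) : ℤ) : ℂ) *
          Complex.exp (2 * Real.pi * Complex.I * m * n / (p : ℂ) ^ (2 * ℓ - 1)))
      * (∑ m' ∈ Finset.range (p ^ 2),
          Complex.exp (2 * Real.pi * Complex.I * m' * n / (p : ℂ) ^ (2 * ℓ))) = 0 := by
  obtain ⟨k, rfl⟩ : ∃ k, ℓ = k + 1 := ⟨ℓ - 1, by omega⟩
  have hp : p ≠ 0 := (Fact.out : p.Prime).ne_zero
  rw [show 2 * (k + 1) - 1 = 2 * k + 1 by omega, show 2 * (k + 1) = 2 * k + 2 by omega,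
    ← Nat.cast_pow, ← Nat.cast_pow, pow_succ' p (2 * k),
    sum_range_mul_exp_of_periodic (f := fun m : ℕ => ((legendreSym p m : ℤ) : ℂ))
      ((legendreSym.periodic_natCast p).comp _)]
  by_cases hn₁ : p * p ^ (2 * k) ∣ n
  · have hχ : ∑ i ∈ range p, ((legendreSym p i : ℤ) : ℂ) = 0 := by
      exact_mod_cast legendreSym.sum_range_eq_zero p hodd
    simp only [exp_two_pi_I_mul_div_eq_one hn₁, mul_one, hχ, zero_mul]
  by_cases hn₀ : p ^ (2 * k) ∣ n
  · have hn₂ : ¬ p ^ (2 * k + 2) ∣ n := fun h =>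
      hn₁ (dvd_trans (by rw [← pow_succ']; exact pow_dvd_pow p (by omega)) h)
    rw [sum_range_exp_eq_zero (pow_ne_zero _ hp)
      (by rw [pow_add]; exact mul_dvd_mul hn₀ dvd_rfl) hn₂, mul_zero]
  · rw [sum_range_exp_eq_zero (pow_ne_zero _ hp) (dvd_mul_left _ _) hn₀, mul_zero, zero_mul]

/-- for p an odd prime and positive integers ℓ, n,
    (∑_{m=0}^{p^{2ℓ−1}−1} (m ∣ p)·exp(2πi·m·n/p^{2ℓ−1}))
      · (∑_{m′=0}^{p²−1} exp(2πi·m′·n/p^{2ℓ})) = 0. -/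
theorem gauss_sum_product_vanishes
    (p : ℕ) [Fact p.Prime] (hodd : p ≠ 2) (ℓ n : ℕ) (hℓ : 0 < ℓ) (hn : 0 < n) :
    (∑ m ∈ Finset.range (p ^ (2 * ℓ - 1)),
        ((legendreSym p (m : ℤ) : ℤ) : ℂ) *
          Complex.exp (2 * Real.pi * Complex.I * m * n / (p : ℂ) ^ (2 * ℓ - 1)))
      * (∑ m' ∈ Finset.range (p ^ 2),
          Complex.exp (2 * Real.pi * Complex.I * m' * n / (p : ℂ) ^ (2 * ℓ))) = 0 :=
  gauss_sum_product_vanishes_general p hodd ℓ n hℓ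
end
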